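/- For f ∈ H^s, 1 ≤ n ≤ s, and every k ∈ ℤ, the error of integrating the Taylor polynomial T_{f,n} of f at 1/2 of degree n−1 satisfies |I_k(f) − I_k(T_{f,n})| ≤ ‖f^{(n)}‖_{L²}/(2^{n−1}·n!) ≤ ‖f‖_{H^s}/(2^{n−1}·n!). -/

import Mathlib

/-
By the integral form of Taylor's remainder at `1/2`, for `x ∈ [0,1]`,
`|f x - T_{f,n} x| ≤ |x - 1/2|^(n-1) / (n-1)! * ‖f⁽ⁿ⁾‖_{L¹}`. Since `|e^{-2πikx}| = 1`, integrating
over `[0,1]` bounds the error by `‖f⁽ⁿ⁾‖_{L¹} / (2^(n-1) n!)`, and `‖·‖_{L¹} ≤ ‖·‖_{L²}` on `[0,1]`.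

For the second inequality, `∫|g|² = |∫g|² + ∫|g - ∫g|²` and `|g x - ∫g| ≤ ‖g'‖_{L¹} ≤ ‖g'‖_{L²}`
give `∫|g|² ≤ |∫g|² + ∫|g'|²`; applied to `g = f⁽ˡ⁾` for `ℓ = n, …, s-1` this telescopes to
`∫|f⁽ⁿ⁾|² ≤ ‖f‖²_{Hˢ}`.
-/

open MeasureTheory Real Complex

noncomputable section

/-- The oscillatory integral `I_k(f) = ∫₀¹ f(x) e^{-2πikx} dx`. -/
def Ik (k : ℤ) (f : ℝ → ℂ) : ℂ :=
  ∫ x in (0:ℝ)..1, f x * Complex.exp (-(2 * Real.pi * Complex.I * (k : ℂ) * (x : ℂ)))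

/-- The Taylor polynomial of `f` at `1/2` of degree `n-1`. -/
def taylorHalf (f : ℝ → ℂ) (n : ℕ) (x : ℝ) : ℂ :=
  ∑ ℓ ∈ Finset.range n, iteratedDeriv ℓ f (1/2) * ((x : ℂ) - 1/2)^ℓ / (Nat.factorial ℓ)

/-- The squared `Hˢ` norm. -/
def hsNormSq (s : ℕ) (f : ℝ → ℂ) : ℝ :=
  (∑ ℓ ∈ Finset.range s, ‖∫ x in (0:ℝ)..1, iteratedDeriv ℓ f x‖^2) +
  ∫ x in (0:ℝ)..1, ‖iteratedDeriv s f x‖^2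

open Set
open scoped Nat Interval

section Taylor

variable {F : Type*} [NormedAddCommGroup F] [NormedSpace ℝ F] [CompleteSpace F] {f : ℝ → F}
  {n : ℕ}

theorem taylor_integral_remainder_iteratedDeriv (hf : ContDiff ℝ (n + 1) f) (x₀ x : ℝ) :
    f x - ∑ k ∈ Finset.range (n + 1), ((k ! : ℝ)⁻¹ * (x - x₀) ^ k) • iteratedDeriv k f x₀ =
      ∫ t in x₀..x, ((x - t) ^ n / n !) • iteratedDeriv (n + 1) f t := by
  rcases eq_or_ne x₀ x with rfl | hne
  · simp [Finset.sum_range_succ']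
  have hD : ∀ k ≤ n + 1, ∀ t ∈ [[x₀, x]],
      iteratedDerivWithin k f [[x₀, x]] t = iteratedDeriv k f t := fun k hk t ht =>
    iteratedDerivWithin_eq_iteratedDeriv (uniqueDiffOn_uIcc hne)
      (hf.of_le (by exact_mod_cast hk)).contDiffAt ht
  have h := taylor_integral_remainder (x₀ := x₀) (x := x) hf.contDiffOn
  rw [taylor_within_apply] at h
  calc f x - ∑ k ∈ Finset.range (n + 1), ((k ! : ℝ)⁻¹ * (x - x₀) ^ k) • iteratedDeriv k f x₀
      = f x - ∑ k ∈ Finset.range (n + 1),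
          ((k ! : ℝ)⁻¹ * (x - x₀) ^ k) • iteratedDerivWithin k f [[x₀, x]] x₀ := by
        congr 1
        refine Finset.sum_congr rfl fun k hk => ?_
        rw [hD k (by simp at hk; omega) x₀ left_mem_uIcc]
    _ = ∫ t in x₀..x, ((x - t) ^ n / n !) • iteratedDerivWithin (n + 1) f [[x₀, x]] t := h
    _ = ∫ t in x₀..x, ((x - t) ^ n / n !) • iteratedDeriv (n + 1) f t :=
        intervalIntegral.integral_congr fun t ht => by simp only [hD (n + 1) le_rfl t ht]

theorem norm_sub_taylor_le (hf : ContDiff ℝ (n + 1) f) (x₀ x : ℝ) :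
    ‖f x - ∑ k ∈ Finset.range (n + 1), ((k ! : ℝ)⁻¹ * (x - x₀) ^ k) • iteratedDeriv k f x₀‖ ≤
      |x - x₀| ^ n / n ! * ∫ t in Ι x₀ x, ‖iteratedDeriv (n + 1) f t‖ := by
  have hD : Continuous (iteratedDeriv (n + 1) f) := hf.continuous_iteratedDeriv _ le_rfl
  rw [taylor_integral_remainder_iteratedDeriv hf,
    intervalIntegral.norm_integral_eq_norm_integral_uIoc, ← MeasureTheory.integral_const_mul]
  refine norm_integral_le_of_norm_le (hD.norm.const_mul _).integrableOn_uIoc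
    (ae_restrict_of_forall_mem measurableSet_uIoc fun t ht => ?_)
  rw [norm_smul, norm_div, norm_pow, Real.norm_eq_abs, Real.norm_natCast]
  gcongr ?_ ^ n / _ * _
  exact abs_sub_right_of_mem_uIcc (uIoc_subset_uIcc ht)

end Taylor

theorem taylorHalf_eq (f : ℝ → ℂ) (n : ℕ) (x : ℝ) :
    taylorHalf f n x =
      ∑ k ∈ Finset.range n, ((k ! : ℝ)⁻¹ * (x - 1 / 2) ^ k) • iteratedDeriv k f (1 / 2) := by
  refine Finset.sum_congr rfl fun k _ => ?_
  simp only [Complex.real_smul]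
  push_cast
  ring

theorem continuous_taylorHalf (f : ℝ → ℂ) (n : ℕ) : Continuous (taylorHalf f n) := by
  unfold taylorHalf
  fun_prop

theorem norm_sub_taylorHalf_le {f : ℝ → ℂ} {n : ℕ} (hf : ContDiff ℝ (n + 1) f) {x : ℝ}
    (hx : x ∈ Icc (0 : ℝ) 1) :
    ‖f x - taylorHalf f (n + 1) x‖ ≤
      |x - 1 / 2| ^ n / n ! * ∫ t in (0 : ℝ)..1, ‖iteratedDeriv (n + 1) f t‖ := by
  have hD : Continuous (iteratedDeriv (n + 1) f) := hf.continuous_iteratedDeriv _ le_rfl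
  rw [taylorHalf_eq]
  refine (norm_sub_taylor_le hf _ _).trans ?_
  rw [intervalIntegral.integral_of_le zero_le_one, ← uIoc_of_le zero_le_one]
  refine mul_le_mul_of_nonneg_left (setIntegral_mono_set hD.norm.integrableOn_uIoc
    (ae_of_all _ fun _ => norm_nonneg _) (Filter.Eventually.of_forall ?_)) (by positivity)
  exact uIoc_subset_uIoc_of_uIcc_subset_uIcc <|
    uIcc_subset_uIcc (by norm_num) (by rwa [uIcc_of_le zero_le_one])

theorem integral_abs_sub_half_pow (n : ℕ) :
    ∫ x in (0 : ℝ)..1, |x - 1 / 2| ^ n = (1 / 2) ^ n / (n + 1) := by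
  have hi : ∀ a b : ℝ, IntervalIntegrable (fun x : ℝ => |x| ^ n) volume a b := fun a b =>
    (by fun_prop : Continuous fun x : ℝ => |x| ^ n).intervalIntegrable a b
  have hpos : ∫ x in (0 : ℝ)..1 / 2, |x| ^ n = ∫ x in (0 : ℝ)..1 / 2, x ^ n :=
    intervalIntegral.integral_congr fun x hx => by
      rw [uIcc_of_le (by norm_num)] at hx
      simp only [abs_of_nonneg hx.1]
  have hneg : ∫ x in (-(1 / 2) : ℝ)..0, |x| ^ n = ∫ x in (0 : ℝ)..1 / 2, |x| ^ n := by
    simpa using (intervalIntegral.integral_comp_neg (a := 0) (b := 1 / 2) fun x : ℝ => |x| ^ n).symm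
  rw [intervalIntegral.integral_comp_sub_right (fun x => |x| ^ n),
    show (0 : ℝ) - 1 / 2 = -(1 / 2) by norm_num, show (1 : ℝ) - 1 / 2 = 1 / 2 by norm_num,
    ← intervalIntegral.integral_add_adjacent_intervals (hi _ 0) (hi 0 _), hneg, hpos,
    integral_pow]
  ring

theorem norm_Ik_sub_le (k : ℤ) {f g : ℝ → ℂ} (hf : Continuous f) (hg : Continuous g) :
    ‖Ik k f - Ik k g‖ ≤ ∫ x in (0 : ℝ)..1, ‖f x - g x‖ := by
  unfold Ik
  rw [← intervalIntegral.integral_sub]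
  · refine (intervalIntegral.norm_integral_le_integral_norm zero_le_one).trans_eq
      (intervalIntegral.integral_congr fun x _ => ?_)
    simp [← sub_mul, Complex.norm_exp]
  all_goals exact (by fun_prop : Continuous _).intervalIntegrable 0 1

section Poincare

variable {E : Type*} [NormedAddCommGroup E] [InnerProductSpace ℝ E] [CompleteSpace E]

theorem integral_norm_sq_eq_sq_norm_integral_add {g : ℝ → E} (hg : Continuous g) :
    ∫ x in (0 : ℝ)..1, ‖g x‖ ^ 2 =
      ‖∫ x in (0 : ℝ)..1, g x‖ ^ 2 + ∫ x in (0 : ℝ)..1, ‖g x - ∫ y in (0 : ℝ)..1, g y‖ ^ 2 := by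
  set c := ∫ y in (0 : ℝ)..1, g y
  have hinner : ∫ x in (0 : ℝ)..1, inner ℝ (g x) c = inner ℝ c c := by
    simp_rw [real_inner_comm c]
    exact (innerSL ℝ c).intervalIntegral_comp_comm (hg.intervalIntegrable (μ := volume) 0 1)
  simp_rw [norm_sub_sq_real]
  rw [intervalIntegral.integral_add, intervalIntegral.integral_sub,
    intervalIntegral.integral_const_mul, hinner, real_inner_self_eq_norm_sq]
  · rw [intervalIntegral.integral_const, sub_zero, one_smul]
    ring
  all_goals exact (by fun_prop : Continuous _).intervalIntegrable 0 1

theorem sq_norm_integral_le_integral_norm_sq {g : ℝ → E} (hg : Continuous g) :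
    ‖∫ x in (0 : ℝ)..1, g x‖ ^ 2 ≤ ∫ x in (0 : ℝ)..1, ‖g x‖ ^ 2 := by
  rw [integral_norm_sq_eq_sq_norm_integral_add hg]
  exact le_add_of_nonneg_right <|
    intervalIntegral.integral_nonneg zero_le_one fun _ _ => by positivity

theorem norm_sub_le_integral_norm_deriv {g g' : ℝ → E} (hg : ∀ t, HasDerivAt g (g' t) t)
    (hg' : Continuous g') {x y : ℝ} (hx : x ∈ Icc (0 : ℝ) 1) (hy : y ∈ Icc (0 : ℝ) 1) :
    ‖g x - g y‖ ≤ ∫ t in (0 : ℝ)..1, ‖g' t‖ := by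
  rw [← intervalIntegral.integral_eq_sub_of_hasDerivAt (fun t _ => hg t)
    (hg'.intervalIntegrable y x)]
  have hsub : Ι y x ⊆ Ι 0 1 := uIoc_subset_uIoc_of_uIcc_subset_uIcc <|
    uIcc_subset_uIcc (by rwa [uIcc_of_le zero_le_one]) (by rwa [uIcc_of_le zero_le_one])
  refine intervalIntegral.norm_integral_le_abs_integral_norm.trans ?_
  refine (intervalIntegral.abs_integral_mono_interval hsub (ae_of_all _ fun _ => norm_nonneg _)
    (hg'.norm.intervalIntegrable 0 1)).trans_eq (abs_of_nonneg ?_)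
  exact intervalIntegral.integral_nonneg zero_le_one fun _ _ => norm_nonneg _

theorem integral_norm_sq_le_of_hasDerivAt {g g' : ℝ → E} (hg : ∀ t, HasDerivAt g (g' t) t)
    (hg' : Continuous g') :
    ∫ x in (0 : ℝ)..1, ‖g x‖ ^ 2 ≤
      ‖∫ x in (0 : ℝ)..1, g x‖ ^ 2 + ∫ x in (0 : ℝ)..1, ‖g' x‖ ^ 2 := by
  have hgc : Continuous g := continuous_iff_continuousAt.2 fun t => (hg t).continuousAt
  set M := ∫ t in (0 : ℝ)..1, ‖g' t‖
  have hosc : ∀ x ∈ Icc (0 : ℝ) 1, ‖g x - ∫ y in (0 : ℝ)..1, g y‖ ≤ M := by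
    intro x hx
    have h := intervalIntegral.norm_integral_le_of_norm_le_const (a := 0) (b := 1)
      (f := fun y => g x - g y) (C := M) fun y hy =>
        norm_sub_le_integral_norm_deriv hg hg' hx (Ioc_subset_Icc_self (by simpa using hy))
    rwa [intervalIntegral.integral_sub intervalIntegrable_const (hgc.intervalIntegrable 0 1),
      intervalIntegral.integral_const, sub_zero, abs_one, mul_one, one_smul] at h
  rw [integral_norm_sq_eq_sq_norm_integral_add hgc]
  gcongr
  calc ∫ x in (0 : ℝ)..1, ‖g x - ∫ y in (0 : ℝ)..1, g y‖ ^ 2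
      ≤ ∫ x in (0 : ℝ)..1, M ^ 2 :=
        intervalIntegral.integral_mono_on zero_le_one
          ((by fun_prop : Continuous _).intervalIntegrable 0 1) intervalIntegrable_const
          fun x hx => pow_le_pow_left₀ (norm_nonneg _) (hosc x hx) 2
    _ = ‖∫ t in (0 : ℝ)..1, ‖g' t‖‖ ^ 2 := by simp [M]
    _ ≤ ∫ x in (0 : ℝ)..1, ‖g' x‖ ^ 2 := by
        simpa using sq_norm_integral_le_integral_norm_sq hg'.norm

theorem integral_norm_sq_iteratedDeriv_le {f : ℝ → E} {n s : ℕ} (hns : n ≤ s)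
    (hf : ContDiff ℝ s f) :
    ∫ x in (0 : ℝ)..1, ‖iteratedDeriv n f x‖ ^ 2 ≤
      ∑ ℓ ∈ Finset.Ico n s, ‖∫ x in (0 : ℝ)..1, iteratedDeriv ℓ f x‖ ^ 2 +
        ∫ x in (0 : ℝ)..1, ‖iteratedDeriv s f x‖ ^ 2 := by
  induction s, hns using Nat.le_induction with
  | base => simp
  | succ s hns ih =>
    have hderiv : ∀ t, HasDerivAt (iteratedDeriv s f) (iteratedDeriv (s + 1) f t) t := fun t => by
      rw [iteratedDeriv_succ]
      exact (hf.differentiable_iteratedDeriv s (by exact_mod_cast s.lt_succ_self) t).hasDerivAt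
    have hstep := integral_norm_sq_le_of_hasDerivAt hderiv
      (hf.continuous_iteratedDeriv _ le_rfl)
    rw [Finset.sum_Ico_succ_top hns]
    linarith [ih (hf.of_le (by exact_mod_cast s.le_succ))]

end Poincare

theorem integral_norm_sq_iteratedDeriv_le_hsNormSq {f : ℝ → ℂ} {n s : ℕ} (hns : n ≤ s)
    (hf : ContDiff ℝ s f) :
    ∫ x in (0 : ℝ)..1, ‖iteratedDeriv n f x‖ ^ 2 ≤ hsNormSq s f := by
  refine (integral_norm_sq_iteratedDeriv_le hns hf).trans (add_le_add_left ?_ _)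
  refine Finset.sum_le_sum_of_subset_of_nonneg ?_ fun _ _ _ => by positivity
  rw [Finset.range_eq_Ico]
  exact Finset.Ico_subset_Ico_left (Nat.zero_le n)

theorem integral_norm_sub_taylorHalf_le {f : ℝ → ℂ} {n : ℕ} (hf : ContDiff ℝ (n + 1) f) :
    ∫ x in (0 : ℝ)..1, ‖f x - taylorHalf f (n + 1) x‖ ≤
      (∫ t in (0 : ℝ)..1, ‖iteratedDeriv (n + 1) f t‖) / (2 ^ n * (n + 1)!) := by
  set L := ∫ t in (0 : ℝ)..1, ‖iteratedDeriv (n + 1) f t‖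
  calc ∫ x in (0 : ℝ)..1, ‖f x - taylorHalf f (n + 1) x‖
      ≤ ∫ x in (0 : ℝ)..1, L / n ! * |x - 1 / 2| ^ n :=
        intervalIntegral.integral_mono_on zero_le_one
          ((hf.continuous.sub (continuous_taylorHalf f _)).norm.intervalIntegrable 0 1)
          ((by fun_prop : Continuous _).intervalIntegrable 0 1)
          fun x hx => (norm_sub_taylorHalf_le hf hx).trans_eq (by ring)
    _ = L / (2 ^ n * (n + 1)!) := by
        rw [intervalIntegral.integral_const_mul, integral_abs_sub_half_pow, Nat.factorial_succ]
        push_cast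
        field_simp
        rw [mul_assoc, ← mul_pow]
        norm_num

theorem stmt_17_general (s : ℕ) (n : ℕ) (hn1 : 1 ≤ n) (hns : n ≤ s)
    (k : ℤ) (f : ℝ → ℂ) (hf : ContDiff ℝ s f) :
    ‖Ik k f - Ik k (taylorHalf f n)‖
        ≤ Real.sqrt (∫ x in (0:ℝ)..1, ‖iteratedDeriv n f x‖^2) /
            (2^(n-1) * Nat.factorial n) ∧
    Real.sqrt (∫ x in (0:ℝ)..1, ‖iteratedDeriv n f x‖^2) /
            (2^(n-1) * Nat.factorial n)
        ≤ Real.sqrt (hsNormSq s f) / (2^(n-1) * Nat.factorial n) := by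
  refine ⟨?_, by gcongr; exact integral_norm_sq_iteratedDeriv_le_hsNormSq hns hf⟩
  obtain ⟨m, rfl⟩ : ∃ m, n = m + 1 := ⟨n - 1, by omega⟩
  have hf' : ContDiff ℝ (m + 1) f := hf.of_le (by exact_mod_cast hns)
  have hD : Continuous (iteratedDeriv (m + 1) f) := hf'.continuous_iteratedDeriv _ le_rfl
  have hL2 : ∫ t in (0 : ℝ)..1, ‖iteratedDeriv (m + 1) f t‖ ≤
      Real.sqrt (∫ x in (0 : ℝ)..1, ‖iteratedDeriv (m + 1) f x‖ ^ 2) :=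
    Real.le_sqrt_of_sq_le (by simpa using sq_norm_integral_le_integral_norm_sq hD.norm)
  calc ‖Ik k f - Ik k (taylorHalf f (m + 1))‖
      ≤ ∫ x in (0 : ℝ)..1, ‖f x - taylorHalf f (m + 1) x‖ :=
        norm_Ik_sub_le k hf.continuous (continuous_taylorHalf f _)
    _ ≤ (∫ t in (0 : ℝ)..1, ‖iteratedDeriv (m + 1) f t‖) / (2 ^ m * (m + 1)!) :=
        integral_norm_sub_taylorHalf_le hf'
    _ ≤ _ := by simp only [Nat.add_sub_cancel]; gcongr

/-- Error of integrating the Taylor polynomial of `f` at `1/2`: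
`|I_k(f) - I_k(T_{f,n})| ≤ ‖f⁽ⁿ⁾‖_{L²}/(2^{n-1} n!) ≤ ‖f‖_{Hˢ}/(2^{n-1} n!)`. -/
theorem stmt_17 (s : ℕ) (hs : 1 ≤ s) (n : ℕ) (hn1 : 1 ≤ n) (hns : n ≤ s)
    (k : ℤ) (f : ℝ → ℂ) (hf : ContDiff ℝ s f) :
    ‖Ik k f - Ik k (taylorHalf f n)‖
        ≤ Real.sqrt (∫ x in (0:ℝ)..1, ‖iteratedDeriv n f x‖^2) /
            (2^(n-1) * Nat.factorial n) ∧
    Real.sqrt (∫ x in (0:ℝ)..1, ‖iteratedDeriv n f x‖^2) /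
            (2^(n-1) * Nat.factorial n)
        ≤ Real.sqrt (hsNormSq s f) / (2^(n-1) * Nat.factorial n) :=
  stmt_17_general s n hn1 hns k f hf
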